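/- arXiv:1204.2234 — 2 statements merged into one kernel-verified Lean document; each statement's English description precedes it below -/
import Mathlib

section
/- Under the cone-field hypotheses (|c(x)| ≥ γ for all x, and inf_x ‖A(x)‖ = λ > ρ = 1/γ + √(1/γ²-1)), for any z with |z| > λ₁ > ρ the vector growth satisfies ‖Λ U (z,1)ᵀ‖ / ‖(z,1)ᵀ‖ ≥ λ/(2λ₁); consequently the Lyapunov exponent of the cocycle satisfies L(α, A) ≥ log λ - log(2ρ). -/
open Matrix Complex

noncomputable def opNorm (A : Matrix (Fin 2) (Fin 2) ℂ) : ℝ :=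
  ‖Matrix.toEuclideanCLM (n := Fin 2) (𝕜 := ℂ) A‖

noncomputable def cocycleProd (A : ℝ → Matrix (Fin 2) (Fin 2) ℂ) (α : ℝ) (n : ℕ) (x : ℝ) :
    Matrix (Fin 2) (Fin 2) ℂ :=
  ((List.range n).map (fun j => A (x + (n - 1 - j : ℕ) * α))).prod

noncomputable def lyapRot (α : ℝ) (A : ℝ → Matrix (Fin 2) (Fin 2) ℂ) : ℝ :=
  ⨅ n : ℕ+, (1 / (n : ℝ)) * ∫ x in (0:ℝ)..1, Real.log (opNorm (cocycleProd A α n x))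

noncomputable def vecNorm (v : Fin 2 → ℂ) : ℝ :=
  Real.sqrt (‖v 0‖ ^ 2 + ‖v 1‖ ^ 2)


/-!
Conjugating by `U₃`, the cocycle `A` becomes `x ↦ Λ(x) U(x)`. Since `|c| ≥ γ` and
`|c|² + |d|² = 1`, every `r ≥ ρ` satisfies `1 + |d| ≤ |c| r` (this is how `ρ` is chosen). For
such `r` and `‖Λ‖ ≥ r`, the cone `r |w₁| ≤ |w₀|` is mapped into itself by `Λ U` and stretched
there by at least `‖Λ‖ / (2r)`. Iterating on the cone `r = λ` gives `‖Aₙ(x)‖ ≥ (λ / 2ρ)ⁿ`, and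
averaging `log ‖Aₙ‖` yields the bound on the Lyapunov exponent.
-/

lemma vecNorm_eq_norm_toLp (v : Fin 2 → ℂ) : vecNorm v = ‖WithLp.toLp 2 v‖ := by
  simp [vecNorm, EuclideanSpace.norm_eq, Fin.sum_univ_two]

lemma vecNorm_mulVec_le (M : Matrix (Fin 2) (Fin 2) ℂ) (v : Fin 2 → ℂ) :
    vecNorm (M *ᵥ v) ≤ opNorm M * vecNorm v := by
  simpa only [vecNorm_eq_norm_toLp, toEuclideanCLM_toLp, opNorm] using
    (toEuclideanCLM (n := Fin 2) (𝕜 := ℂ) M).le_opNorm (WithLp.toLp 2 v)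

lemma vecNorm_mulVec_of_conjTranspose_mul_self {U : Matrix (Fin 2) (Fin 2) ℂ} (hU : Uᴴ * U = 1)
    (v : Fin 2 → ℂ) : vecNorm (U *ᵥ v) = vecNorm v := by
  have hu : toEuclideanCLM (n := Fin 2) (𝕜 := ℂ) U ∈ unitary _ :=
    Unitary.map_mem _ (mem_unitaryGroup_iff'.2 hU)
  rw [vecNorm_eq_norm_toLp, vecNorm_eq_norm_toLp, ← toEuclideanCLM_toLp,
    ContinuousLinearMap.norm_map_of_mem_unitary hu]

lemma norm_apply_zero_le_vecNorm (v : Fin 2 → ℂ) : ‖v 0‖ ≤ vecNorm v := by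
  rw [vecNorm_eq_norm_toLp]
  exact PiLp.norm_apply_le (WithLp.toLp 2 v) 0

lemma vecNorm_le_norm_add_norm (v : Fin 2 → ℂ) : vecNorm v ≤ ‖v 0‖ + ‖v 1‖ :=
  Real.sqrt_le_iff.2 ⟨by positivity, by nlinarith [norm_nonneg (v 0), norm_nonneg (v 1)]⟩

lemma continuous_opNorm : Continuous opNorm :=
  continuous_norm.comp (LinearMap.continuous_of_finiteDimensional
    (toEuclideanCLM (n := Fin 2) (𝕜 := ℂ)).toAlgEquiv.toLinearMap)

lemma cone_invariance_ineq {g h r a b : ℝ} (hg : 0 ≤ g) (hh : 0 ≤ h) (hgh : g ^ 2 + h ^ 2 = 1)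
    (hr : 1 + h ≤ g * r) (hb : 0 ≤ b) (hab : r * b ≤ a) :
    h * a + g * b ≤ r * (g * a - h * b) := by
  have hg0 : 0 < g := hg.lt_of_ne (by rintro rfl; linarith)
  have hh1 : h ≤ 1 := by nlinarith
  have hr0 : 0 < r := by nlinarith
  -- multiply `hr` by `1 - h` and use `1 - h ^ 2 = g ^ 2`
  have hg_le : g ≤ r * (1 - h) :=
    le_of_mul_le_mul_left (by nlinarith [mul_le_mul_of_nonneg_right hr (sub_nonneg.2 hh1)]) hg0
  have hquad : 0 ≤ g * r ^ 2 - 2 * r * h - g := by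
    nlinarith [mul_le_mul_of_nonneg_left hr hr0.le]
  nlinarith [mul_nonneg (sub_nonneg.2 hab) (show 0 ≤ r * g - h by nlinarith), mul_nonneg hb hquad]

lemma cone_growth_ineq {g h r a b : ℝ} (hg : 0 ≤ g) (hh : 0 ≤ h) (hgh : g ^ 2 + h ^ 2 = 1)
    (hr : 1 + h ≤ g * r) (hb : 0 ≤ b) (hab : r * b ≤ a) :
    a + b ≤ 2 * r * (g * a - h * b) := by
  have hg1 : g ≤ 1 := by nlinarith
  have hr1 : 1 ≤ r := by nlinarith [mul_le_mul_of_nonneg_right hg1 (show 0 ≤ r by nlinarith)]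
  have ha : 0 ≤ a := by nlinarith
  nlinarith [mul_nonneg (sub_nonneg.2 hr) ha, mul_nonneg hh (sub_nonneg.2 hab),
    mul_nonneg hb (sub_nonneg.2 hr1)]

lemma one_add_norm_le_norm_mul {γ r : ℝ} {c d : ℂ} (hγ : 0 < γ) (hc : γ ≤ ‖c‖)
    (hcd : ‖c‖ ^ 2 + ‖d‖ ^ 2 = 1) (hr : 1 / γ + √(1 / γ ^ 2 - 1) ≤ r) :
    1 + ‖d‖ ≤ ‖c‖ * r := by
  have hd : ‖d‖ / γ ≤ √(1 / γ ^ 2 - 1) := by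
    refine Real.le_sqrt_of_sq_le ?_
    rw [div_pow, div_sub_one (by positivity), div_le_div_iff_of_pos_right (by positivity)]
    nlinarith
  have hsqrt := Real.sqrt_nonneg (1 / γ ^ 2 - 1)
  calc 1 + ‖d‖ = γ * (1 / γ + ‖d‖ / γ) := by field_simp
    _ ≤ ‖c‖ * (1 / γ + √(1 / γ ^ 2 - 1)) := by gcongr
    _ ≤ ‖c‖ * r := by gcongr

/-- The paper's `Λ U`, with `Λ = diag (N, N⁻¹)` and `U ∈ SU(2)` of first column `(c, d)`. -/
noncomputable def polarMatrix (N : ℝ) (c d : ℂ) : Matrix (Fin 2) (Fin 2) ℂ :=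
  !![((N : ℝ) : ℂ), 0; 0, ((N⁻¹ : ℝ) : ℂ)] * !![c, -(starRingEnd ℂ) d; d, (starRingEnd ℂ) c]

/-- The closure of the paper's cone `B(∞, r)` of directions `(z, 1)` with `|z| > r`. -/
def cone (r : ℝ) : Set (Fin 2 → ℂ) := {w | r * ‖w 1‖ ≤ ‖w 0‖}

lemma cone_anti {r r' : ℝ} (h : r ≤ r') : cone r' ⊆ cone r :=
  fun _ hw => (mul_le_mul_of_nonneg_right h (norm_nonneg _)).trans hw

section polarMatrix

variable {N r : ℝ} {c d : ℂ}

lemma polarMatrix_mulVec_zero (w : Fin 2 → ℂ) :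
    (polarMatrix N c d *ᵥ w) 0 = N * (c * w 0 - (starRingEnd ℂ) d * w 1) := by
  rw [polarMatrix, ← mulVec_mulVec]
  simp [mulVec, vecHead, vecTail, sub_eq_add_neg]

lemma polarMatrix_mulVec_one (w : Fin 2 → ℂ) :
    (polarMatrix N c d *ᵥ w) 1 = (N⁻¹ : ℝ) * (d * w 0 + (starRingEnd ℂ) c * w 1) := by
  rw [polarMatrix, ← mulVec_mulVec]
  simp [mulVec, vecHead, vecTail]

lemma le_norm_polarMatrix_mulVec_zero (hN : 0 ≤ N) (w : Fin 2 → ℂ) :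
    N * (‖c‖ * ‖w 0‖ - ‖d‖ * ‖w 1‖) ≤ ‖(polarMatrix N c d *ᵥ w) 0‖ := by
  rw [polarMatrix_mulVec_zero, norm_mul, Complex.norm_real, Real.norm_of_nonneg hN]
  gcongr
  simpa [norm_mul] using norm_sub_norm_le (c * w 0) ((starRingEnd ℂ) d * w 1)

lemma norm_polarMatrix_mulVec_one_le (hN : 0 ≤ N) (w : Fin 2 → ℂ) :
    ‖(polarMatrix N c d *ᵥ w) 1‖ ≤ N⁻¹ * (‖d‖ * ‖w 0‖ + ‖c‖ * ‖w 1‖) := by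
  rw [polarMatrix_mulVec_one, norm_mul, Complex.norm_real, Real.norm_of_nonneg (inv_nonneg.2 hN)]
  gcongr
  simpa [norm_mul] using norm_add_le (d * w 0) ((starRingEnd ℂ) c * w 1)

theorem polarMatrix_mapsTo_cone (hcd : ‖c‖ ^ 2 + ‖d‖ ^ 2 = 1) (hr : 1 + ‖d‖ ≤ ‖c‖ * r)
    (hrN : r ≤ N) : Set.MapsTo (polarMatrix N c d *ᵥ ·) (cone r) (cone r) := by
  intro w hw
  have hinv := cone_invariance_ineq (norm_nonneg c) (norm_nonneg d) hcd hr (norm_nonneg _) hw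
  have hr0 : 0 < r := by nlinarith [norm_nonneg c, norm_nonneg d]
  have hN0 : 0 < N := hr0.trans_le hrN
  have hpos : 0 ≤ ‖c‖ * ‖w 0‖ - ‖d‖ * ‖w 1‖ := by
    nlinarith [norm_nonneg c, norm_nonneg d, norm_nonneg (w 0), norm_nonneg (w 1)]
  show r * ‖(polarMatrix N c d *ᵥ w) 1‖ ≤ _
  calc r * ‖(polarMatrix N c d *ᵥ w) 1‖
      ≤ r * (N⁻¹ * (r * (‖c‖ * ‖w 0‖ - ‖d‖ * ‖w 1‖))) := by
        gcongr
        exact (norm_polarMatrix_mulVec_one_le hN0.le w).trans (by gcongr)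
    _ = r ^ 2 / N * (‖c‖ * ‖w 0‖ - ‖d‖ * ‖w 1‖) := by ring
    _ ≤ N * (‖c‖ * ‖w 0‖ - ‖d‖ * ‖w 1‖) := by
        gcongr
        rw [div_le_iff₀ hN0]
        nlinarith
    _ ≤ ‖(polarMatrix N c d *ᵥ w) 0‖ := le_norm_polarMatrix_mulVec_zero hN0.le w

theorem div_mul_vecNorm_le_polarMatrix_mulVec {l : ℝ} (hcd : ‖c‖ ^ 2 + ‖d‖ ^ 2 = 1)
    (hr : 1 + ‖d‖ ≤ ‖c‖ * r) (hl : 0 ≤ l) (hlN : l ≤ N) {w : Fin 2 → ℂ} (hw : w ∈ cone r) :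
    l / (2 * r) * vecNorm w ≤ vecNorm (polarMatrix N c d *ᵥ w) := by
  have hgrowth := cone_growth_ineq (norm_nonneg c) (norm_nonneg d) hcd hr (norm_nonneg _) hw
  have hr0 : 0 < r := by nlinarith [norm_nonneg c, norm_nonneg d]
  have hpos : 0 ≤ ‖c‖ * ‖w 0‖ - ‖d‖ * ‖w 1‖ := by
    nlinarith [norm_nonneg (w 0), norm_nonneg (w 1)]
  calc l / (2 * r) * vecNorm w ≤ l / (2 * r) * (‖w 0‖ + ‖w 1‖) := by
        gcongr
        exact vecNorm_le_norm_add_norm w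
    _ ≤ l / (2 * r) * (2 * r * (‖c‖ * ‖w 0‖ - ‖d‖ * ‖w 1‖)) := by gcongr
    _ = l * (‖c‖ * ‖w 0‖ - ‖d‖ * ‖w 1‖) := by field_simp
    _ ≤ N * (‖c‖ * ‖w 0‖ - ‖d‖ * ‖w 1‖) := by gcongr
    _ ≤ ‖(polarMatrix N c d *ᵥ w) 0‖ := le_norm_polarMatrix_mulVec_zero (hl.trans hlN) w
    _ ≤ vecNorm (polarMatrix N c d *ᵥ w) := norm_apply_zero_le_vecNorm _

end polarMatrix

section cocycle

variable {A B U : ℝ → Matrix (Fin 2) (Fin 2) ℂ} {α : ℝ}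

@[simp]
lemma cocycleProd_zero (x : ℝ) : cocycleProd A α 0 x = 1 := rfl

lemma cocycleProd_succ (n : ℕ) (x : ℝ) :
    cocycleProd A α (n + 1) x = cocycleProd A α n (x + α) * A x := by
  simp only [cocycleProd, List.range_succ, List.map_append, List.prod_append, List.map_cons,
    List.map_nil, List.prod_cons, List.prod_nil, mul_one, Nat.add_sub_cancel, Nat.sub_self,
    Nat.cast_zero, zero_mul, add_zero]
  congr 1
  refine congrArg List.prod (List.map_congr_left fun j hj => ?_)
  have hj : j < n := List.mem_range.mp hj
  rw [show n - j = n - 1 - j + 1 by omega]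
  push_cast
  ring_nf

lemma continuous_cocycleProd (hA : Continuous A) (n : ℕ) :
    Continuous (cocycleProd A α n) :=
  continuous_list_prod _ fun _ _ => hA.comp (continuous_add_const _)

lemma cocycleProd_mul_eq_mul_cocycleProd (hAB : ∀ x, A x * U x = U (x + α) * B x) (n : ℕ)
    (x : ℝ) : cocycleProd A α n x * U x = U (x + n * α) * cocycleProd B α n x := by
  induction n generalizing x with
  | zero => simp
  | succ n ih =>
    rw [cocycleProd_succ, cocycleProd_succ, Matrix.mul_assoc, hAB, ← Matrix.mul_assoc, ih,
      Matrix.mul_assoc]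
    push_cast
    ring_nf

lemma pow_mul_vecNorm_le_cocycleProd_mulVec {K : Set (Fin 2 → ℂ)} {t : ℝ} (ht : 0 ≤ t)
    (hK : ∀ x, Set.MapsTo (B x *ᵥ ·) K K)
    (hgrowth : ∀ x, ∀ w ∈ K, t * vecNorm w ≤ vecNorm (B x *ᵥ w)) (n : ℕ) (x : ℝ)
    {w : Fin 2 → ℂ} (hw : w ∈ K) : t ^ n * vecNorm w ≤ vecNorm (cocycleProd B α n x *ᵥ w) := by
  induction n generalizing x w with
  | zero => simp
  | succ n ih =>
    rw [cocycleProd_succ, ← mulVec_mulVec]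
    calc t ^ (n + 1) * vecNorm w = t ^ n * (t * vecNorm w) := by ring
      _ ≤ t ^ n * vecNorm (B x *ᵥ w) := by gcongr; exact hgrowth x w hw
      _ ≤ _ := ih (x + α) (hK x hw)

lemma pow_le_opNorm_cocycleProd (hU : ∀ x, (U x)ᴴ * U x = 1)
    (hAB : ∀ x, A x * U x = U (x + α) * B x) {K : Set (Fin 2 → ℂ)} {t : ℝ} (ht : 0 ≤ t)
    (hK : ∀ x, Set.MapsTo (B x *ᵥ ·) K K)
    (hgrowth : ∀ x, ∀ w ∈ K, t * vecNorm w ≤ vecNorm (B x *ᵥ w)) {w : Fin 2 → ℂ} (hw : w ∈ K)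
    (hw0 : 0 < vecNorm w) (n : ℕ) (x : ℝ) : t ^ n ≤ opNorm (cocycleProd A α n x) := by
  refine le_of_mul_le_mul_right ?_ hw0
  calc t ^ n * vecNorm w ≤ vecNorm (cocycleProd B α n x *ᵥ w) :=
        pow_mul_vecNorm_le_cocycleProd_mulVec ht hK hgrowth n x hw
    _ = vecNorm (cocycleProd A α n x *ᵥ (U x *ᵥ w)) := by
        rw [mulVec_mulVec, cocycleProd_mul_eq_mul_cocycleProd hAB, ← mulVec_mulVec,
          vecNorm_mulVec_of_conjTranspose_mul_self (hU _)]
    _ ≤ opNorm (cocycleProd A α n x) * vecNorm w := by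
        simpa only [vecNorm_mulVec_of_conjTranspose_mul_self (hU x)] using
          vecNorm_mulVec_le (cocycleProd A α n x) (U x *ᵥ w)

lemma log_le_lyapRot (hA : Continuous A) {t : ℝ} (ht : 0 < t)
    (hbound : ∀ (n : ℕ) x, t ^ n ≤ opNorm (cocycleProd A α n x)) : Real.log t ≤ lyapRot α A := by
  refine le_ciInf fun n => ?_
  have hn : (0 : ℝ) < n := by exact_mod_cast n.pos
  have hlog (x : ℝ) : n * Real.log t ≤ Real.log (opNorm (cocycleProd A α n x)) := by
    rw [← Real.log_pow]
    exact Real.log_le_log (pow_pos ht n) (hbound n x)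
  have hint : IntervalIntegrable (fun x => Real.log (opNorm (cocycleProd A α n x)))
      MeasureTheory.volume 0 1 :=
    ((continuous_opNorm.comp (continuous_cocycleProd hA n)).continuousOn.log fun x _ =>
      ((pow_pos ht n).trans_le (hbound n x)).ne').intervalIntegrable
  have hmono := intervalIntegral.integral_mono_on zero_le_one intervalIntegrable_const hint
    fun x _ => hlog x
  rw [intervalIntegral.integral_const, sub_zero, one_smul] at hmono
  rwa [one_div_mul_eq_div, le_div_iff₀' hn]

end cocycle

lemma mul_eq_mul_of_conjTranspose_mul_mul_eq {ι 𝕜 : Type*} [Fintype ι] [DecidableEq ι]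
    [CommRing 𝕜] [StarRing 𝕜] {V A U B : Matrix ι ι 𝕜} (hV : Vᴴ * V = 1)
    (h : Vᴴ * A * U = B) : A * U = V * B := by
  rw [← h, Matrix.mul_assoc, ← Matrix.mul_assoc V, mul_eq_one_comm.mp hV,
    Matrix.one_mul]

theorem cone_field_lyapunov_bound_general (α : ℝ) (A U₃ : ℝ → Matrix (Fin 2) (Fin 2) ℂ)
    (c d : ℝ → ℂ) (hA : Continuous A)
    (hU₃ : ∀ x, (U₃ x)ᴴ * U₃ x = 1)
    (hcd : ∀ x, ‖c x‖ ^ 2 + ‖d x‖ ^ 2 = 1)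
    (hdec : ∀ x, (U₃ (x + α))ᴴ * A x * U₃ x =
      (!![((opNorm (A x) : ℝ) : ℂ), 0; 0, (((opNorm (A x))⁻¹ : ℝ) : ℂ)]) *
        !![c x, -(starRingEnd ℂ) (d x); d x, (starRingEnd ℂ) (c x)])
    (γ : ℝ) (hγ0 : 0 < γ) (hc : ∀ x, γ ≤ ‖c x‖)
    (ρ : ℝ) (hρ : ρ = 1/γ + Real.sqrt (1/γ^2 - 1))
    (lam : ℝ) (hglb : IsGLB (Set.range fun x => opNorm (A x)) lam) (hlam : ρ < lam) :
    (∀ lam₁ : ℝ, ρ < lam₁ → ∀ z : ℂ, lam₁ < ‖z‖ → ∀ x : ℝ,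
      lam / (2 * lam₁) * vecNorm ![z, 1] ≤
        vecNorm ((( !![((opNorm (A x) : ℝ) : ℂ), 0; 0, (((opNorm (A x))⁻¹ : ℝ) : ℂ)] *
          !![c x, -(starRingEnd ℂ) (d x); d x, (starRingEnd ℂ) (c x)]).mulVec ![z, 1]))) ∧
    Real.log lam - Real.log (2 * ρ) ≤ lyapRot α A := by
  have hlam_le (x : ℝ) : lam ≤ opNorm (A x) := hglb.1 ⟨x, rfl⟩
  have hcone (x : ℝ) {r : ℝ} (hr : ρ ≤ r) : 1 + ‖d x‖ ≤ ‖c x‖ * r :=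
    one_add_norm_le_norm_mul hγ0 (hc x) (hcd x) (hρ ▸ hr)
  have hρ0 : 0 < ρ := hρ ▸ by positivity
  have hlam0 : 0 < lam := hρ0.trans hlam
  refine ⟨fun lam₁ hlam₁ z hz x => ?_, ?_⟩
  · have hz : ![z, 1] ∈ cone lam₁ := by simpa [cone] using hz.le
    exact div_mul_vecNorm_le_polarMatrix_mulVec (hcd x) (hcone x hlam₁.le) hlam0.le
      (hlam_le x) hz
  · have hAB (x : ℝ) : A x * U₃ x = U₃ (x + α) * polarMatrix (opNorm (A x)) (c x) (d x) :=
      mul_eq_mul_of_conjTranspose_mul_mul_eq (hU₃ _) (hdec x)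
    rw [← Real.log_div hlam0.ne' (by positivity)]
    refine log_le_lyapRot hA (by positivity) (pow_le_opNorm_cocycleProd hU₃ hAB (K := cone lam)
      (by positivity) (fun x => polarMatrix_mapsTo_cone (hcd x) (hcone x hlam.le) (hlam_le x))
      (fun x w hw => ?_) (w := ![1, 0]) (by simp [cone]) (by simp [vecNorm]))
    exact div_mul_vecNorm_le_polarMatrix_mulVec (hcd x) (hcone x le_rfl) hlam0.le (hlam_le x)
      (cone_anti hlam.le hw)

/-- Under the cone-field hypotheses (`|c(x)| ≥ γ`, `inf_x ‖A(x)‖ = λ > ρ = 1/γ+√(1/γ²-1)`),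
the vector growth in the cone satisfies `‖ΛU(z,1)ᵀ‖/‖(z,1)ᵀ‖ ≥ λ/(2λ₁)`, and consequently
`L(α,A) ≥ log λ - log(2ρ)`. -/
theorem cone_field_lyapunov_bound (α : ℝ) (A U₃ : ℝ → Matrix (Fin 2) (Fin 2) ℂ)
    (c d : ℝ → ℂ) (hA : Continuous A) (hper : ∀ x, A (x + 1) = A x)
    (hU₃ : ∀ x, (U₃ x)ᴴ * U₃ x = 1)
    (hcd : ∀ x, ‖c x‖ ^ 2 + ‖d x‖ ^ 2 = 1)
    (hdec : ∀ x, (U₃ (x + α))ᴴ * A x * U₃ x =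
      (!![((opNorm (A x) : ℝ) : ℂ), 0; 0, (((opNorm (A x))⁻¹ : ℝ) : ℂ)]) *
        !![c x, -(starRingEnd ℂ) (d x); d x, (starRingEnd ℂ) (c x)])
    (γ : ℝ) (hγ0 : 0 < γ) (hγ1 : γ < 1) (hc : ∀ x, γ ≤ ‖c x‖)
    (ρ : ℝ) (hρ : ρ = 1/γ + Real.sqrt (1/γ^2 - 1))
    (lam : ℝ) (hglb : IsGLB (Set.range fun x => opNorm (A x)) lam) (hlam : ρ < lam) :
    (∀ lam₁ : ℝ, ρ < lam₁ → ∀ z : ℂ, lam₁ < ‖z‖ → ∀ x : ℝ,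
      lam / (2 * lam₁) * vecNorm ![z, 1] ≤
        vecNorm ((( !![((opNorm (A x) : ℝ) : ℂ), 0; 0, (((opNorm (A x))⁻¹ : ℝ) : ℂ)] *
          !![c x, -(starRingEnd ℂ) (d x); d x, (starRingEnd ℂ) (c x)]).mulVec ![z, 1]))) ∧
    Real.log lam - Real.log (2 * ρ) ≤ lyapRot α A :=
  cone_field_lyapunov_bound_general α A U₃ c d hA hU₃ hcd hdec γ hγ0 hc ρ hρ lam hglb hlam
end

section
/- If α is a Brjuno number and n a positive integer, then nα is a Brjuno number. -/
/-- The continued fraction digits of `α`: `a (k+1) = ⌊1/x_k⌋` where `x_0 = fract α`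
and `x_{k+1} = fract (1/x_k)`. -/
noncomputable def cfDigit (α : ℝ) (k : ℕ) : ℤ :=
  ⌊((fun x : ℝ => Int.fract x⁻¹)^[k] (Int.fract α))⁻¹⌋

/-- The denominators `q_k` of the continued fraction convergents of `α`:
`q 0 = 1`, `q 1 = a 1`, `q (k+2) = a (k+2) q (k+1) + q k`. -/
noncomputable def cfDen (α : ℝ) : ℕ → ℤ
  | 0 => 1
  | 1 => cfDigit α 0
  | (k + 2) => cfDigit α (k + 1) * cfDen α (k + 1) + cfDen α k

/-- `α` is a Brjuno number if it is irrational and `Σ_k (log q_{k+1})/q_k < ∞`. -/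
def Brjuno (α : ℝ) : Prop :=
  Irrational α ∧ Summable (fun k : ℕ => Real.log (cfDen α (k + 1)) / (cfDen α k : ℝ))

/-!
Let `Q_k` be the convergent denominators of `n α` and `q_j` those of `α`. The integer
`n Q_k` satisfies `‖n Q_k α‖ = ‖Q_k (n α)‖ < 1 / Q_{k+1}`, while by Lagrange's best approximation
property every `0 < m < q_{j+1}` has `‖m α‖ > 1 / (2 q_{j+1})`. Choosing `j` with
`q_j ≤ n Q_k < q_{j+1}` therefore gives `Q_{k+1} < 2 q_{j+1}`, so the `k`-th Brjuno term of `n α`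
is at most `log (2 q_{j+1}) / Q_k`. As the `Q_k` double every two steps and `Q_k ≥ q_j / n`, the
indices `k` attached to a fixed `j` contribute at most `4 n log (2 q_{j+1}) / q_j`, and these
bounds are summable because `α` is Brjuno.
-/

open Finset

structure DoublesInTwoSteps (Q : ℕ → ℝ) : Prop where
  pos : ∀ k, 0 < Q k
  mono : Monotone Q
  two_mul_le : ∀ k, 2 * Q k ≤ Q (k + 2)

namespace DoublesInTwoSteps

variable {Q : ℕ → ℝ} (hQ : DoublesInTwoSteps Q)
include hQ

theorem sum_Ico_inv_add_le {a b : ℕ} (hab : a ≤ b) :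
    ∑ k ∈ Ico a b, (Q k)⁻¹ + 2 * (Q b)⁻¹ + 2 * (Q (b + 1))⁻¹ ≤ 2 * (Q a)⁻¹ + 2 * (Q (a + 1))⁻¹ := by
  induction b, hab using Nat.le_induction with
  | base => simp
  | succ b hab ih =>
    have h2 := inv_anti₀ (mul_pos two_pos (hQ.pos b)) (hQ.two_mul_le b)
    rw [mul_inv] at h2
    rw [sum_Ico_succ_top hab]
    linarith

theorem sum_inv_le {s : Finset ℕ} {t : ℝ} (ht : 0 < t) (hs : ∀ k ∈ s, t ≤ Q k) :
    ∑ k ∈ s, (Q k)⁻¹ ≤ 4 / t := by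
  rcases s.eq_empty_or_nonempty with rfl | hne
  · rw [sum_empty]; positivity
  set a := s.min' hne
  have hsub : s ⊆ Ico a (s.max' hne + 1) := fun k hk =>
    mem_Ico.2 ⟨s.min'_le k hk, Nat.lt_succ_of_le (s.le_max' k hk)⟩
  have hnonneg : ∀ k, 0 ≤ (Q k)⁻¹ := fun k => (inv_pos.2 (hQ.pos k)).le
  have hta : t ≤ Q a := hs a (s.min'_mem hne)
  calc ∑ k ∈ s, (Q k)⁻¹ ≤ ∑ k ∈ Ico a (s.max' hne + 1), (Q k)⁻¹ :=
        sum_le_sum_of_subset_of_nonneg hsub fun k _ _ => hnonneg k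
    _ ≤ 2 * (Q a)⁻¹ + 2 * (Q (a + 1))⁻¹ := by
        have := hQ.sum_Ico_inv_add_le ((s.min'_le_max' hne).trans (Nat.le_succ _))
        linarith [hnonneg (s.max' hne + 1), hnonneg (s.max' hne + 1 + 1)]
    _ ≤ 4 * (Q a)⁻¹ := by
        linarith [inv_anti₀ (hQ.pos a) (hQ.mono (Nat.le_succ a))]
    _ ≤ 4 / t := by
        rw [div_eq_mul_inv]
        gcongr

theorem summable_inv : Summable fun k => (Q k)⁻¹ :=
  summable_of_sum_range_le (fun k => (inv_pos.2 (hQ.pos k)).le) fun _ =>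
    hQ.sum_inv_le (hQ.pos 0) fun k _ => hQ.mono (Nat.zero_le k)

theorem summable_of_le_div_comp {a c q : ℕ → ℝ} (J : ℕ → ℕ) {C : ℝ} (hC : 0 < C)
    (ha : ∀ k, 0 ≤ a k) (hc : ∀ j, 0 ≤ c j) (hq : ∀ j, 0 < q j)
    (haJ : ∀ k, a k ≤ c (J k) / Q k) (hJ : ∀ k, q (J k) ≤ C * Q k)
    (hcq : Summable fun j => c j / q j) : Summable a := by
  classical
  refine summable_of_sum_range_le (c := 4 * C * ∑' j, c j / q j) ha fun K => ?_
  have hfiber : ∀ j, ∑ k ∈ (range K).filter (J · = j), (Q k)⁻¹ ≤ 4 * C / q j := fun j => by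
    have := hQ.sum_inv_le (div_pos (hq j) hC) (s := (range K).filter (J · = j)) fun k hk => by
      rw [div_le_iff₀' hC, ← (mem_filter.1 hk).2]
      exact hJ k
    rwa [div_div_eq_mul_div] at this
  calc ∑ k ∈ range K, a k ≤ ∑ k ∈ range K, c (J k) * (Q k)⁻¹ :=
        sum_le_sum fun k _ => haJ k
    _ = ∑ j ∈ (range K).image J, c j * ∑ k ∈ (range K).filter (J · = j), (Q k)⁻¹ := by
        rw [← sum_fiberwise_of_maps_to (fun k hk => mem_image_of_mem J hk)]
        refine sum_congr rfl fun j _ => ?_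
        rw [mul_sum]
        exact sum_congr rfl fun k hk => by rw [(mem_filter.1 hk).2]
    _ ≤ ∑ j ∈ (range K).image J, 4 * C * (c j / q j) :=
        sum_le_sum fun j _ => by
          calc c j * _ ≤ c j * (4 * C / q j) := mul_le_mul_of_nonneg_left (hfiber j) (hc j)
            _ = _ := by ring
    _ ≤ 4 * C * ∑' j, c j / q j := by
        rw [← mul_sum]
        exact mul_le_mul_of_nonneg_left
          (hcq.sum_le_tsum _ fun j _ => div_nonneg (hc j) (hq j).le) (by positivity)

end DoublesInTwoSteps

theorem abs_le_abs_add_of_mul_nonneg {a b : ℝ} (h : 0 ≤ a * b) : |a| ≤ |a + b| :=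
  sq_le_sq.1 (by nlinarith)

theorem ne_zero_and_mul_nonpos_of_pos_of_lt {X Y q q' : ℤ} (hq : 0 < q)
    (hpos : 0 < X * q + Y * q') (hlt : X * q + Y * q' < q') : X ≠ 0 ∧ X * Y ≤ 0 := by
  rcases lt_trichotomy Y 0 with hY | rfl | hY
  · have : 0 < X := pos_of_mul_pos_left (by nlinarith) hq.le
    exact ⟨this.ne', by nlinarith⟩
  · exact ⟨by rintro rfl; simp at hpos, by simp⟩
  · have : X < 0 := neg_of_mul_neg_left (by nlinarith) hq.le
    exact ⟨this.ne, by nlinarith⟩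

/-- Lagrange's argument: `(m, r)` has integer coordinates `X, Y` in the basis `(q, p), (q', p')`;
`m < q'` forces `X ≠ 0` and `X * Y ≤ 0`, so `X (q β - p)` and `Y (q' β - p')` have the same sign. -/
theorem abs_mul_sub_le_abs_mul_sub {β : ℝ} {q p q' p' m r : ℤ} (hdet : (p' * q - p * q') ^ 2 = 1)
    (hsign : (q * β - p) * (q' * β - p') ≤ 0) (hq : 0 < q) (hm : 0 < m) (hmq : m < q') :
    |q * β - p| ≤ |m * β - r| := by
  set ε := p' * q - p * q'
  set X := ε * (m * p' - r * q')
  set Y := ε * (r * q - m * p)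
  have hmX : X * q + Y * q' = m := by linear_combination m * hdet
  have hrX : X * p + Y * p' = r := by linear_combination r * hdet
  obtain ⟨hX, hXY⟩ := ne_zero_and_mul_nonpos_of_pos_of_lt hq (hmX ▸ hm) (hmX ▸ hmq)
  have hsplit : (m : ℝ) * β - r = X * (q * β - p) + Y * (q' * β - p') := by
    rw [← hmX, ← hrX]; push_cast; ring
  have hsame : 0 ≤ (X * (q * β - p)) * (Y * (q' * β - p')) := by
    have : ((X * Y : ℤ) : ℝ) ≤ 0 := by exact_mod_cast hXY
    push_cast at this
    nlinarith
  calc |q * β - p| ≤ |(X : ℝ)| * |q * β - p| :=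
        le_mul_of_one_le_left (abs_nonneg _) (by exact_mod_cast Int.one_le_abs hX)
    _ = |X * (q * β - p)| := (abs_mul _ _).symm
    _ ≤ |m * β - r| := hsplit ▸ abs_le_abs_add_of_mul_nonneg hsame

noncomputable def gaussIter (α : ℝ) (k : ℕ) : ℝ := (fun x : ℝ => Int.fract x⁻¹)^[k] (Int.fract α)

noncomputable def cfNum (α : ℝ) : ℕ → ℤ
  | 0 => ⌊α⌋
  | 1 => cfDigit α 0 * ⌊α⌋ + 1
  | (k + 2) => cfDigit α (k + 1) * cfNum α (k + 1) + cfNum α k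

noncomputable def gaussProd (α : ℝ) (k : ℕ) : ℝ := ∏ j ∈ range (k + 1), gaussIter α j

section ContinuedFraction

variable {α : ℝ} {k : ℕ}

theorem gaussIter_succ : gaussIter α (k + 1) = Int.fract (gaussIter α k)⁻¹ :=
  Function.iterate_succ_apply' ..

theorem cfDigit_eq_floor : cfDigit α k = ⌊(gaussIter α k)⁻¹⌋ := rfl

theorem cfDen_add_two : cfDen α (k + 2) = cfDigit α (k + 1) * cfDen α (k + 1) + cfDen α k := rfl

theorem cfNum_add_two : cfNum α (k + 2) = cfDigit α (k + 1) * cfNum α (k + 1) + cfNum α k := rfl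

theorem gaussProd_zero : gaussProd α 0 = Int.fract α := prod_range_one _

theorem gaussProd_succ : gaussProd α (k + 1) = gaussProd α k * gaussIter α (k + 1) :=
  prod_range_succ ..

theorem Irrational.fract (h : Irrational α) : Irrational (Int.fract α) := h.sub_intCast _

theorem Irrational.gaussIter (hα : Irrational α) (k : ℕ) : Irrational (gaussIter α k) := by
  induction k with
  | zero => exact hα.fract
  | succ k ih => rw [gaussIter_succ]; exact ih.inv.fract

theorem exists_gaussIter_eq_fract (k : ℕ) : ∃ y, gaussIter α k = Int.fract y := by
  cases k with
  | zero => exact ⟨α, rfl⟩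
  | succ k => exact ⟨_, gaussIter_succ⟩

theorem gaussIter_pos (hα : Irrational α) (k : ℕ) : 0 < gaussIter α k := by
  obtain ⟨y, hy⟩ := exists_gaussIter_eq_fract (α := α) k
  exact hy ▸ (Int.fract_nonneg y).lt_of_ne' (hy ▸ (hα.gaussIter k).ne_zero)

theorem gaussIter_lt_one (k : ℕ) : gaussIter α k < 1 := by
  obtain ⟨y, hy⟩ := exists_gaussIter_eq_fract (α := α) k
  exact hy ▸ Int.fract_lt_one y

theorem one_le_cfDigit (hα : Irrational α) (k : ℕ) : 1 ≤ cfDigit α k := by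
  rw [cfDigit_eq_floor, Int.le_floor, Int.cast_one]
  exact one_le_inv₀ (gaussIter_pos hα k) |>.2 (gaussIter_lt_one k).le

theorem gaussIter_mul_gaussIter_succ (hα : Irrational α) (k : ℕ) :
    gaussIter α k * gaussIter α (k + 1) = 1 - cfDigit α k * gaussIter α k := by
  have := (gaussIter_pos hα k).ne'
  rw [gaussIter_succ, Int.fract, cfDigit_eq_floor]
  field_simp

theorem gaussProd_pos (hα : Irrational α) (k : ℕ) : 0 < gaussProd α k :=
  prod_pos fun j _ => gaussIter_pos hα j

theorem one_le_cfDen (hα : Irrational α) (k : ℕ) : 1 ≤ cfDen α k := by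
  induction k using Nat.twoStepInduction with
  | zero => rfl
  | one => exact one_le_cfDigit hα 0
  | more k _ ih => rw [cfDen_add_two]; nlinarith [one_le_cfDigit hα (k + 1)]

theorem cfDen_succ_add_le (hα : Irrational α) (k : ℕ) :
    cfDen α (k + 1) + cfDen α k ≤ cfDen α (k + 2) := by
  rw [cfDen_add_two]
  nlinarith [one_le_cfDigit hα (k + 1), one_le_cfDen hα (k + 1)]

theorem natCast_le_cfDen (hα : Irrational α) (k : ℕ) : (k : ℤ) ≤ cfDen α k := by
  induction k using Nat.twoStepInduction with
  | zero => exact zero_le_one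
  | one => exact one_le_cfDen hα 1
  | more k _ ih =>
    push_cast at ih ⊢
    linarith [cfDen_succ_add_le hα k, one_le_cfDen hα k]

theorem cfDen_le_cfDen_succ (hα : Irrational α) (k : ℕ) : cfDen α k ≤ cfDen α (k + 1) := by
  cases k with
  | zero => exact one_le_cfDigit hα 0
  | succ k => linarith [cfDen_succ_add_le hα k, one_le_cfDen hα k]

theorem doublesInTwoSteps_cfDen (hα : Irrational α) :
    DoublesInTwoSteps fun k => (cfDen α k : ℝ) where
  pos k := by exact_mod_cast one_le_cfDen hα k
  mono := monotone_nat_of_le_succ fun k => by exact_mod_cast cfDen_le_cfDen_succ hα k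
  two_mul_le k := by
    exact_mod_cast (cfDen_succ_add_le hα k).trans' (by linarith [cfDen_le_cfDen_succ hα k])

theorem cfNum_succ_mul_cfDen_sub (k : ℕ) :
    cfNum α (k + 1) * cfDen α k - cfNum α k * cfDen α (k + 1) = (-1) ^ k := by
  induction k with
  | zero => simp only [cfNum, cfDen, pow_zero]; ring
  | succ k ih =>
    rw [cfNum_add_two, cfDen_add_two, pow_succ, ← ih]
    ring

theorem cfDen_mul_sub_cfNum (hα : Irrational α) (k : ℕ) :
    cfDen α k * α - cfNum α k = (-1) ^ k * gaussProd α k := by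
  induction k using Nat.twoStepInduction with
  | zero =>
    rw [gaussProd_zero, Int.fract, show cfDen α 0 = 1 from rfl, show cfNum α 0 = ⌊α⌋ from rfl]
    ring
  | one =>
    have := gaussIter_mul_gaussIter_succ hα 0
    rw [show gaussIter α 0 = Int.fract α from rfl, Int.fract] at this
    rw [gaussProd_succ, gaussProd_zero, Int.fract, show cfDen α 1 = cfDigit α 0 from rfl,
      show cfNum α 1 = cfDigit α 0 * ⌊α⌋ + 1 from rfl]
    push_cast
    linear_combination this
  | more k ih ih' =>
    have := gaussIter_mul_gaussIter_succ hα (k + 1)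
    rw [gaussProd_succ] at ih'
    rw [cfDen_add_two, cfNum_add_two, gaussProd_succ, gaussProd_succ]
    push_cast
    linear_combination (cfDigit α (k + 1) : ℝ) * ih' + ih - (-1) ^ k * gaussProd α k * this

theorem abs_cfDen_mul_sub_cfNum (hα : Irrational α) (k : ℕ) :
    |cfDen α k * α - cfNum α k| = gaussProd α k := by
  rw [cfDen_mul_sub_cfNum hα, abs_mul, abs_pow, abs_neg, abs_one, one_pow, one_mul,
    abs_of_pos (gaussProd_pos hα k)]

theorem gaussProd_mul_cfDen_succ_add (hα : Irrational α) (k : ℕ) :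
    gaussProd α k * cfDen α (k + 1) + gaussProd α (k + 1) * cfDen α k = 1 := by
  have hdet : ((cfNum α (k + 1) * cfDen α k - cfNum α k * cfDen α (k + 1) : ℤ) : ℝ) = (-1) ^ k := by
    exact_mod_cast cfNum_succ_mul_cfDen_sub k
  push_cast at hdet
  have hD := cfDen_mul_sub_cfNum hα k
  have hD' := cfDen_mul_sub_cfNum hα (k + 1)
  rw [pow_succ] at hD'
  have key : (-1) ^ k * (gaussProd α k * cfDen α (k + 1) + gaussProd α (k + 1) * cfDen α k)
      = (-1) ^ k * 1 := by
    linear_combination hdet - cfDen α (k + 1) * hD + cfDen α k * hD'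
  exact mul_left_cancel₀ (pow_ne_zero k (neg_ne_zero.2 one_ne_zero)) key

theorem gaussProd_mul_cfDen_succ_lt_one (hα : Irrational α) (k : ℕ) :
    gaussProd α k * cfDen α (k + 1) < 1 := by
  have := mul_pos (gaussProd_pos hα (k + 1)) (doublesInTwoSteps_cfDen hα |>.pos k)
  linarith [gaussProd_mul_cfDen_succ_add hα k]

theorem one_lt_two_mul_cfDen_succ_mul_gaussProd (hα : Irrational α) (k : ℕ) :
    1 < 2 * cfDen α (k + 1) * gaussProd α k := by
  have hP := gaussProd_pos hα k
  have hq : (cfDen α k : ℝ) ≤ cfDen α (k + 1) := by exact_mod_cast cfDen_le_cfDen_succ hα k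
  have hx : gaussIter α (k + 1) * cfDen α k < cfDen α (k + 1) := by
    nlinarith [gaussIter_lt_one (α := α) (k + 1), (doublesInTwoSteps_cfDen hα).pos k]
  rw [← gaussProd_mul_cfDen_succ_add hα k, gaussProd_succ]
  nlinarith [mul_lt_mul_of_pos_left hx hP]

theorem gaussProd_le_abs_mul_sub (hα : Irrational α) {k : ℕ} {m : ℤ} (hm : 0 < m)
    (hmq : m < cfDen α (k + 1)) (r : ℤ) : gaussProd α k ≤ |m * α - r| := by
  have hdet : (cfNum α (k + 1) * cfDen α k - cfNum α k * cfDen α (k + 1)) ^ 2 = 1 := by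
    rw [cfNum_succ_mul_cfDen_sub, ← pow_mul, mul_comm, pow_mul, neg_one_sq, one_pow]
  have hsign : (cfDen α k * α - cfNum α k) * (cfDen α (k + 1) * α - cfNum α (k + 1)) ≤ 0 := by
    rw [cfDen_mul_sub_cfNum hα, cfDen_mul_sub_cfNum hα, pow_succ]
    have := mul_pos (gaussProd_pos hα k) (gaussProd_pos hα (k + 1))
    have : ((-1 : ℝ) ^ k) ^ 2 = 1 := by rw [← pow_mul, mul_comm, pow_mul, neg_one_sq, one_pow]
    nlinarith
  rw [← abs_cfDen_mul_sub_cfNum hα]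
  exact abs_mul_sub_le_abs_mul_sub hdet hsign (one_le_cfDen hα k) hm hmq

theorem exists_cfDen_le_lt (hα : Irrational α) {m : ℤ} (hm : 1 ≤ m) :
    ∃ j, cfDen α j ≤ m ∧ m < cfDen α (j + 1) := by
  classical
  have hex : ∃ j, m < cfDen α (j + 1) := ⟨m.toNat, by
    have := natCast_le_cfDen hα (m.toNat + 1)
    push_cast at this
    linarith [Int.self_le_toNat m]⟩
  refine ⟨Nat.find hex, ?_, Nat.find_spec hex⟩
  rcases h : Nat.find hex with _ | j
  · exact hm
  · exact not_lt.1 (Nat.find_min hex (h ▸ j.lt_succ_self))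

theorem cfDen_succ_lt_two_mul {γ : ℝ} (hα : Irrational α) (hγ : Irrational γ) {j k : ℕ}
    {m : ℤ} (hm : 0 < m) (hmq : m < cfDen α (j + 1)) (hmγ : (m : ℝ) * α = cfDen γ k * γ) :
    cfDen γ (k + 1) < 2 * cfDen α (j + 1) := by
  have hP : gaussProd α j ≤ gaussProd γ k := by
    have := gaussProd_le_abs_mul_sub hα hm hmq (cfNum γ k)
    rwa [hmγ, abs_cfDen_mul_sub_cfNum hγ] at this
  have hlt := gaussProd_mul_cfDen_succ_lt_one hγ k
  have hgt := one_lt_two_mul_cfDen_succ_mul_gaussProd hα j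
  have : (cfDen γ (k + 1) : ℝ) < 2 * cfDen α (j + 1) := by
    refine lt_of_mul_lt_mul_left (a := gaussProd γ k) ?_ (gaussProd_pos hγ k).le
    nlinarith [(doublesInTwoSteps_cfDen hα).pos (j + 1)]
  exact_mod_cast this

theorem Brjuno.summable_log_two_mul_div (hα : Brjuno α) :
    Summable fun j => Real.log (2 * cfDen α (j + 1)) / cfDen α j := by
  have hq := doublesInTwoSteps_cfDen hα.1
  have heq : ∀ j, Real.log (2 * cfDen α (j + 1)) / cfDen α j
      = Real.log 2 * (cfDen α j : ℝ)⁻¹ + Real.log (cfDen α (j + 1)) / cfDen α j := fun j => by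
    rw [Real.log_mul two_ne_zero (hq.pos (j + 1)).ne']
    ring
  simpa only [heq] using (hq.summable_inv.mul_left _).add hα.2

end ContinuedFraction

/-- If `α` is a Brjuno number and `n` is a positive integer, then `nα` is Brjuno. -/
theorem brjuno_nat_mul (α : ℝ) (n : ℕ) (hn : 0 < n) (hα : Brjuno α) :
    Brjuno (n * α) := by
  have hγ : Irrational (n * α) := irrational_natCast_mul_iff.2 ⟨hn.ne', hα.1⟩
  have hq := doublesInTwoSteps_cfDen hα.1
  have hQ := doublesInTwoSteps_cfDen hγ
  have hm : ∀ k, 1 ≤ (n : ℤ) * cfDen (n * α) k := fun k =>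
    one_le_mul_of_one_le_of_one_le (by exact_mod_cast hn) (one_le_cfDen hγ k)
  choose J hJle hJlt using fun k => exists_cfDen_le_lt hα.1 (hm k)
  refine ⟨hγ, hQ.summable_of_le_div_comp J (c := fun j => Real.log (2 * cfDen α (j + 1)))
    (Nat.cast_pos.2 hn) (fun k => ?_) (fun j => ?_) hq.pos (fun k => ?_) (fun k => ?_)
    hα.summable_log_two_mul_div⟩
  · exact div_nonneg (Real.log_nonneg (by exact_mod_cast one_le_cfDen hγ (k + 1))) (hQ.pos k).le
  · have : (1 : ℝ) ≤ cfDen α (j + 1) := by exact_mod_cast one_le_cfDen hα.1 (j + 1)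
    exact Real.log_nonneg (by linarith)
  · refine div_le_div_of_nonneg_right (Real.log_le_log (hQ.pos _) ?_) (hQ.pos k).le
    exact_mod_cast (cfDen_succ_lt_two_mul hα.1 hγ (hm k) (hJlt k) (by push_cast; ring)).le
  · exact_mod_cast hJle k
end
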